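/- arXiv:1901.00904 — 5 statements merged into one kernel-verified Lean document; each statement's English description precedes it below -/
import Mathlib

section
/- Let R be a commutative ring, m ≥ 1, and let A be a 2m×2m matrix over R with m×m blocks A11, A12, A21, A22. Let Δ := det(A11) • A22 − A21 · adj(A11) · A12 be the fraction-free Schur complement, where adj denotes the adjugate matrix. Then det(Δ) = det(A) · det(A11)^(m−1). -/
/-! Left multiplication by the block matrix `[[adj A₁₁, 0], [-A₂₁ adj A₁₁, det A₁₁ • 1]]` turns
`A` into the block upper triangular `[[det A₁₁ • 1, adj A₁₁ A₁₂], [0, Δ]]`, so taking determinants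
gives `det A₁₁ ^ m * det Δ = det A₁₁ ^ (m - 1) * det A₁₁ ^ m * det A`. The factor `det A₁₁ ^ m` cancels when
`det A₁₁` is a non-zero-divisor. The general case follows by replacing `A₁₁` with `X • 1 + A₁₁`
over `R[X]`, whose determinant is monic, and evaluating at `X = 0`. -/

open Polynomial

namespace Matrix

section ffSchurComplement

variable {m n R S : Type*} [Fintype m] [DecidableEq m] [CommRing R] [CommRing S]

def ffSchurComplement (A : Matrix m m R) (B : Matrix m n R) (C : Matrix n m R)
    (D : Matrix n n R) : Matrix n n R :=
  A.det • D - C * A.adjugate * B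

theorem map_ffSchurComplement (f : R →+* S) (A : Matrix m m R) (B : Matrix m n R)
    (C : Matrix n m R) (D : Matrix n n R) :
    (ffSchurComplement A B C D).map f =
      ffSchurComplement (A.map f) (B.map f) (C.map f) (D.map f) := by
  rw [ffSchurComplement, ffSchurComplement, Matrix.map_sub _ (map_sub f), Matrix.map_mul,
    Matrix.map_mul, Matrix.map_smul' _ _ _ (map_mul f), RingHom.map_det,
    show A.adjugate.map f = (A.map f).adjugate from f.map_adjugate A]
  rfl

variable [Fintype n] [DecidableEq n]

theorem fromBlocks_adjugate_mul_fromBlocks (A : Matrix m m R) (B : Matrix m n R)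
    (C : Matrix n m R) (D : Matrix n n R) :
    fromBlocks A.adjugate 0 (-(C * A.adjugate)) (A.det • 1) * fromBlocks A B C D =
      fromBlocks (A.det • 1) (A.adjugate * B) 0 (ffSchurComplement A B C D) := by
  simp only [fromBlocks_multiply, Matrix.neg_mul, Matrix.mul_assoc, adjugate_mul, Matrix.zero_mul,
    add_zero, Matrix.mul_smul, Matrix.mul_one, smul_mul, Matrix.one_mul, neg_add_cancel,
    neg_add_eq_sub, ffSchurComplement]

theorem det_pow_mul_det_ffSchurComplement (A : Matrix m m R) (B : Matrix m n R)
    (C : Matrix n m R) (D : Matrix n n R) :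
    A.det ^ Fintype.card m * (ffSchurComplement A B C D).det =
      A.det ^ (Fintype.card m - 1) * A.det ^ Fintype.card n * (fromBlocks A B C D).det := by
  have h := congrArg det (fromBlocks_adjugate_mul_fromBlocks A B C D)
  simp only [det_mul, det_fromBlocks_zero₁₂, det_fromBlocks_zero₂₁, det_adjugate, det_smul,
    det_one, mul_one] at h
  exact h.symm

theorem det_ffSchurComplement_of_isLeftRegular {A : Matrix n n R} (hA : IsLeftRegular A.det)
    (B C D : Matrix n n R) :
    (ffSchurComplement A B C D).det =
      (fromBlocks A B C D).det * A.det ^ (Fintype.card n - 1) :=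
  (hA.pow (Fintype.card n)).eq_iff.mp <| by
    rw [det_pow_mul_det_ffSchurComplement]
    ring

end ffSchurComplement

section X_smul_one_add_map_C

variable {m n R : Type*} [CommRing R]

theorem map_C_map_eval_zero (A : Matrix m n R) : (A.map C).map (eval 0) = A := by
  ext
  simp

theorem X_smul_one_add_map_C_map_eval_zero [DecidableEq n] (A : Matrix n n R) :
    ((X : R[X]) • (1 : Matrix n n R[X]) + A.map C).map (eval 0) = A := by
  ext i j
  by_cases h : i = j <;> simp [h]

theorem isLeftRegular_det_X_smul_one_add_map_C [Fintype n] [DecidableEq n] (A : Matrix n n R) :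
    IsLeftRegular ((X : R[X]) • (1 : Matrix n n R[X]) + A.map C).det :=
  (Monic.isRegular (by rw [Monic.def, ← leadingCoeff_det_X_one_add_C A])).left

end X_smul_one_add_map_C

end Matrix

open Matrix in
theorem det_ffSchurComplement_general {R : Type*} [CommRing R] (m : ℕ)
    (A11 A12 A21 A22 : Matrix (Fin m) (Fin m) R) :
    (A11.det • A22 - A21 * A11.adjugate * A12).det =
      (Matrix.fromBlocks A11 A12 A21 A22).det * A11.det ^ (m - 1) := by
  have h := congrArg (evalRingHom 0) <| det_ffSchurComplement_of_isLeftRegular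
    (isLeftRegular_det_X_smul_one_add_map_C A11) (A12.map C) (A21.map C) (A22.map C)
  rw [map_mul, map_pow, RingHom.map_det, RingHom.map_det, RingHom.map_det, RingHom.mapMatrix_apply,
    RingHom.mapMatrix_apply, RingHom.mapMatrix_apply, map_ffSchurComplement, fromBlocks_map] at h
  simp only [coe_evalRingHom, X_smul_one_add_map_C_map_eval_zero, map_C_map_eval_zero,
    Fintype.card_fin] at h
  exact h

/-- For a commutative ring `R`, `m ≥ 1`, and a `2m × 2m` matrix over `R`
with `m × m` blocks `A11, A12, A21, A22`, the fraction-free Schur complement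
`Δ = det(A11) • A22 - A21 * adj(A11) * A12` satisfies
`det Δ = det A * det(A11) ^ (m - 1)`. -/
theorem det_ffSchurComplement {R : Type*} [CommRing R] (m : ℕ) (hm : 1 ≤ m)
    (A11 A12 A21 A22 : Matrix (Fin m) (Fin m) R) :
    (A11.det • A22 - A21 * A11.adjugate * A12).det =
      (Matrix.fromBlocks A11 A12 A21 A22).det * A11.det ^ (m - 1) :=
  det_ffSchurComplement_general m A11 A12 A21 A22
end

section
/- Let R be a commutative ring, m ≥ 2, and let A be a 2m×2m matrix over R with m×m blocks A11, A12, A21, A22, and Δ := det(A11) • A22 − A21 · adj(A11) · A12. Then det(A11)^(m−2) • B22 = adj(Δ), where B22 denotes the bottom-right m×m block of the adjugate matrix adj(A). -/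
/-!
Over a ring where `A₁₁` and `A` are invertible, write `S = A₂₂ - A₂₁ A₁₁⁻¹ A₁₂` for the Schur
complement. Then `Δ = det A₁₁ • S`, and since `(A⁻¹)₂₂ = S⁻¹` and `det A = det A₁₁ * det S`,
`adj(A)₂₂ = det A₁₁ • adj S`; comparing with `adj Δ = det A₁₁ ^ (m - 1) • adj S` gives the identity.
Both sides are polynomial in the entries of `A` and commute with ring homomorphisms, so the general
case follows from the generic matrix over `ℤ[Xᵢⱼ]`, which embeds in its fraction field, where its
determinant and that of its top-left block are nonzero.
-/

open Matrix

namespace Matrix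

variable {m n R S : Type*} [Fintype m] [DecidableEq m]

def fractionFreeSchur [CommRing R] (M : Matrix (m ⊕ n) (m ⊕ n) R) : Matrix n n R :=
  M.toBlocks₁₁.det • M.toBlocks₂₂ - M.toBlocks₂₁ * M.toBlocks₁₁.adjugate * M.toBlocks₁₂

section CommRing

variable [CommRing R] [CommRing S]

theorem adjugate_eq_det_smul_invOf (M : Matrix m m R) [Invertible M] :
    M.adjugate = M.det • ⅟M := by
  rw [invOf_eq_nonsing_inv, inv_def, smul_smul,
    Ring.mul_inverse_cancel _ (isUnit_det_of_invertible M), one_smul]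

theorem fractionFreeSchur_fromBlocks (A : Matrix m m R) (B : Matrix m n R) (C : Matrix n m R)
    (D : Matrix n n R) [Invertible A] :
    fractionFreeSchur (fromBlocks A B C D) = A.det • (D - C * ⅟A * B) := by
  rw [fractionFreeSchur, toBlocks_fromBlocks₁₁, toBlocks_fromBlocks₁₂, toBlocks_fromBlocks₂₁,
    toBlocks_fromBlocks₂₂, adjugate_eq_det_smul_invOf A, smul_sub, Matrix.mul_smul,
    Matrix.smul_mul]

theorem toBlocks₂₂_adjugate_fromBlocks [Fintype n] [DecidableEq n] (A : Matrix m m R)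
    (B : Matrix m n R) (C : Matrix n m R) (D : Matrix n n R) [Invertible A]
    [Invertible (D - C * ⅟A * B)] :
    (fromBlocks A B C D).adjugate.toBlocks₂₂ = A.det • (D - C * ⅟A * B).adjugate := by
  let := fromBlocks₁₁Invertible A B C D
  have hinv : (⅟(fromBlocks A B C D)).toBlocks₂₂ = ⅟(D - C * ⅟A * B) := by
    rw [invOf_fromBlocks₁₁_eq, toBlocks_fromBlocks₂₂]
  calc (fromBlocks A B C D).adjugate.toBlocks₂₂
      = (fromBlocks A B C D).det • (⅟(fromBlocks A B C D)).toBlocks₂₂ := by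
        rw [adjugate_eq_det_smul_invOf]; rfl
    _ = A.det • (D - C * ⅟A * B).adjugate := by
        rw [hinv, det_fromBlocks₁₁, adjugate_eq_det_smul_invOf (D - C * ⅟A * B), smul_smul]

theorem pow_det_smul_toBlocks₂₂_adjugate_of_isUnit [Fintype n] [DecidableEq n]
    (hn : 2 ≤ Fintype.card n) (M : Matrix (m ⊕ n) (m ⊕ n) R) (h₁₁ : IsUnit M.toBlocks₁₁.det)
    (hM : IsUnit M.det) :
    M.toBlocks₁₁.det ^ (Fintype.card n - 2) • M.adjugate.toBlocks₂₂ =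
      (fractionFreeSchur M).adjugate := by
  obtain ⟨A, B, C, D, rfl⟩ : ∃ A B C D, M = fromBlocks A B C D :=
    ⟨_, _, _, _, (fromBlocks_toBlocks M).symm⟩
  rw [toBlocks_fromBlocks₁₁] at h₁₁ ⊢
  let := invertibleOfIsUnitDet A h₁₁
  rw [det_fromBlocks₁₁] at hM
  let := invertibleOfIsUnitDet _ (isUnit_of_mul_isUnit_right hM)
  obtain ⟨k, hk⟩ : ∃ k, Fintype.card n = k + 2 := ⟨_, (Nat.sub_add_cancel hn).symm⟩
  rw [toBlocks₂₂_adjugate_fromBlocks, fractionFreeSchur_fromBlocks, adjugate_smul, smul_smul,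
    hk, Nat.add_sub_cancel, ← pow_succ]
  rfl

theorem map_adjugate_fractionFreeSchur [Fintype n] [DecidableEq n] (f : R →+* S)
    (M : Matrix (m ⊕ n) (m ⊕ n) R) :
    (fractionFreeSchur M).adjugate.map f = (fractionFreeSchur (M.map f)).adjugate := by
  have hΔ : (fractionFreeSchur M).map f = fractionFreeSchur (M.map f) := by
    rw [fractionFreeSchur, fractionFreeSchur, Matrix.map_sub _ (map_sub f), Matrix.map_mul,
      Matrix.map_mul, map_smul' _ _ _ (map_mul f), RingHom.map_det]
    exact congrArg (fun X => _ - _ * X * _) (RingHom.map_adjugate f M.toBlocks₁₁)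
  rw [← hΔ]
  exact RingHom.map_adjugate f _

theorem map_pow_det_smul_toBlocks₂₂_adjugate [Fintype n] [DecidableEq n] (f : R →+* S)
    (M : Matrix (m ⊕ n) (m ⊕ n) R) (k : ℕ) :
    (M.toBlocks₁₁.det ^ k • M.adjugate.toBlocks₂₂).map f =
      (M.map f).toBlocks₁₁.det ^ k • (M.map f).adjugate.toBlocks₂₂ := by
  rw [map_smul' _ _ _ (map_mul f), map_pow, RingHom.map_det]
  exact congrArg (fun X => _ • toBlocks₂₂ X) (RingHom.map_adjugate f M)

end CommRing

theorem det_toBlocks₁₁_mvPolynomialX_ne_zero [CommRing R] [Nontrivial R] [DecidableEq n] :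
    (mvPolynomialX (m ⊕ n) (m ⊕ n) R).toBlocks₁₁.det ≠ 0 := by
  let f := MvPolynomial.eval fun p : (m ⊕ n) × (m ⊕ n) => (1 : Matrix (m ⊕ n) (m ⊕ n) R) p.1 p.2
  have hf : f.mapMatrix (mvPolynomialX (m ⊕ n) (m ⊕ n) R).toBlocks₁₁ = 1 := by
    change ((mvPolynomialX _ _ R).map (MvPolynomial.eval₂ (RingHom.id R) _)).toBlocks₁₁ = 1
    rw [mvPolynomialX_map_eval₂, ← fromBlocks_one, toBlocks_fromBlocks₁₁]
  intro h
  have := congrArg f h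
  rw [RingHom.map_det, hf, det_one, map_zero] at this
  exact one_ne_zero this

theorem pow_det_smul_toBlocks₂₂_adjugate_mvPolynomialX [Fintype n] [DecidableEq n] [CommRing R]
    [IsDomain R] (hn : 2 ≤ Fintype.card n) :
    let X := mvPolynomialX (m ⊕ n) (m ⊕ n) R
    X.toBlocks₁₁.det ^ (Fintype.card n - 2) • X.adjugate.toBlocks₂₂ =
      (fractionFreeSchur X).adjugate := by
  intro X
  let P := MvPolynomial ((m ⊕ n) × (m ⊕ n)) R
  let ι := algebraMap P (FractionRing P)
  have hι : Function.Injective ι := IsFractionRing.injective P (FractionRing P)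
  apply map_injective hι
  beta_reduce
  rw [map_pow_det_smul_toBlocks₂₂_adjugate, map_adjugate_fractionFreeSchur]
  refine pow_det_smul_toBlocks₂₂_adjugate_of_isUnit hn _ (isUnit_iff_ne_zero.2 ?_)
    (isUnit_iff_ne_zero.2 ?_)
  · change (ι.mapMatrix X.toBlocks₁₁).det ≠ 0
    rw [← RingHom.map_det]
    exact (map_ne_zero_iff ι hι).2 det_toBlocks₁₁_mvPolynomialX_ne_zero
  · change (ι.mapMatrix X).det ≠ 0
    rw [← RingHom.map_det]
    exact (map_ne_zero_iff ι hι).2 (det_mvPolynomialX_ne_zero _ _)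

theorem pow_det_smul_toBlocks₂₂_adjugate [Fintype n] [DecidableEq n] [CommRing R]
    (hn : 2 ≤ Fintype.card n) (M : Matrix (m ⊕ n) (m ⊕ n) R) :
    M.toBlocks₁₁.det ^ (Fintype.card n - 2) • M.adjugate.toBlocks₂₂ =
      (fractionFreeSchur M).adjugate := by
  let f := MvPolynomial.eval₂Hom (Int.castRingHom R) fun p : (m ⊕ n) × (m ⊕ n) => M p.1 p.2
  have hM : (mvPolynomialX (m ⊕ n) (m ⊕ n) ℤ).map f = M := mvPolynomialX_map_eval₂ _ M
  have := congrArg (Matrix.map · f) (pow_det_smul_toBlocks₂₂_adjugate_mvPolynomialX (R := ℤ) hn)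
  beta_reduce at this
  rwa [map_pow_det_smul_toBlocks₂₂_adjugate, map_adjugate_fractionFreeSchur, hM] at this

end Matrix

/-- For a commutative ring `R`, `m ≥ 2`, and a `2m × 2m` matrix `A` over `R`
with `m × m` blocks `A11, A12, A21, A22`, letting
`Δ = det(A11) • A22 - A21 * adj(A11) * A12`, the bottom-right block `B22` of `adj(A)`
satisfies `det(A11) ^ (m - 2) • B22 = adj(Δ)`. -/
theorem ffSchur_adjugate_block22 {R : Type*} [CommRing R] (m : ℕ) (hm : 2 ≤ m)
    (A11 A12 A21 A22 : Matrix (Fin m) (Fin m) R) :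
    A11.det ^ (m - 2) • (Matrix.fromBlocks A11 A12 A21 A22).adjugate.toBlocks₂₂ =
      (A11.det • A22 - A21 * A11.adjugate * A12).adjugate := by
  have := pow_det_smul_toBlocks₂₂_adjugate (by rwa [Fintype.card_fin])
    (fromBlocks A11 A12 A21 A22)
  simpa only [fractionFreeSchur, toBlocks_fromBlocks₁₁, toBlocks_fromBlocks₁₂,
    toBlocks_fromBlocks₂₁, toBlocks_fromBlocks₂₂, Fintype.card_fin] using this
end

section
/- Let R be a commutative ring, σ a type, m ≥ 1 and d natural numbers, and let A be a 2m×2m matrix over MvPolynomial σ R such that every entry of A has total degree at most d. Then every entry of the fraction-free Schur complement Δ(A) := det(A11) • A22 − A21 · adj(A11) · A12 has total degree at most (m+1)·d. -/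
/-!
Expanding determinants over permutations, `det A11` has total degree at most `m * d`, and each
entry of `adj A11`, being the determinant of `A11` with one row replaced by a standard basis
vector, has total degree at most `(m - 1) * d`. Both `det A11 • A22` and `A21 * adj A11 * A12`
then have entries of total degree at most `(m + 1) * d`.
-/

open MvPolynomial

namespace Matrix

variable {R σ : Type*} [CommRing R]

section Square

variable {n : Type*} [Fintype n] [DecidableEq n]

theorem totalDegree_det_le_sum (M : Matrix n n (MvPolynomial σ R)) (g : n → ℕ)
    (hM : ∀ i j, (M i j).totalDegree ≤ g i) :
    M.det.totalDegree ≤ ∑ i, g i := by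
  rw [det_apply]
  refine totalDegree_finsetSum_le fun π _ => (totalDegree_smul_le _ _).trans ?_
  calc (∏ i, M (π i) i).totalDegree
      ≤ ∑ i, (M (π i) i).totalDegree := totalDegree_finsetProd _ _
    _ ≤ ∑ i, g (π i) := Finset.sum_le_sum fun i _ => hM (π i) i
    _ = ∑ i, g i := Equiv.sum_comp π g

theorem totalDegree_det_le (M : Matrix n n (MvPolynomial σ R)) (d : ℕ)
    (hM : ∀ i j, (M i j).totalDegree ≤ d) :
    M.det.totalDegree ≤ Fintype.card n * d := by
  simpa using totalDegree_det_le_sum M (fun _ => d) hM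

theorem totalDegree_adjugate_apply_le (M : Matrix n n (MvPolynomial σ R)) (d : ℕ)
    (hM : ∀ i j, (M i j).totalDegree ≤ d) (i j : n) :
    (M.adjugate i j).totalDegree ≤ (Fintype.card n - 1) * d := by
  rw [adjugate_apply]
  have hrow : ∀ k l, ((M.updateRow j (Pi.single i 1)) k l).totalDegree
      ≤ Function.update (fun _ => d) j 0 k := by
    intro k l
    rcases eq_or_ne k j with rfl | hk
    · rcases eq_or_ne l i with rfl | hl <;> simp [*]
    · simpa [updateRow_ne hk, hk] using hM k l
  refine (totalDegree_det_le_sum _ _ hrow).trans_eq ?_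
  simp [Finset.sum_update_of_mem, Finset.card_sdiff]

end Square

theorem totalDegree_mul_apply_le {l m n : Type*} [Fintype m]
    (A : Matrix l m (MvPolynomial σ R)) (B : Matrix m n (MvPolynomial σ R)) {a b : ℕ}
    (hA : ∀ i j, (A i j).totalDegree ≤ a) (hB : ∀ i j, (B i j).totalDegree ≤ b) (i : l) (k : n) :
    ((A * B) i k).totalDegree ≤ a + b :=
  totalDegree_finsetSum_le fun j _ => (totalDegree_mul _ _).trans (add_le_add (hA i j) (hB j k))

end Matrix

open Matrix in
/-- If every entry of a `2m × 2m` matrix (`m ≥ 1`) over a multivariate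
polynomial ring, given by `m × m` blocks `A11, A12, A21, A22`, has total degree at most `d`,
then every entry of the fraction-free Schur complement
`Δ = det(A11) • A22 - A21 * adj(A11) * A12` has total degree at most `(m + 1) * d`. -/
theorem totalDegree_ffSchur_le {R : Type*} [CommRing R] {σ : Type*} (m d : ℕ) (hm : 1 ≤ m)
    (A11 A12 A21 A22 : Matrix (Fin m) (Fin m) (MvPolynomial σ R))
    (hA : ∀ i j, ((Matrix.fromBlocks A11 A12 A21 A22) i j).totalDegree ≤ d) :
    ∀ i j, ((A11.det • A22 - A21 * A11.adjugate * A12) i j).totalDegree ≤ (m + 1) * d := by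
  have h11 : ∀ i j, (A11 i j).totalDegree ≤ d := fun i j => hA (.inl i) (.inl j)
  have h12 : ∀ i j, (A12 i j).totalDegree ≤ d := fun i j => hA (.inl i) (.inr j)
  have h21 : ∀ i j, (A21 i j).totalDegree ≤ d := fun i j => hA (.inr i) (.inl j)
  have h22 : ∀ i j, (A22 i j).totalDegree ≤ d := fun i j => hA (.inr i) (.inr j)
  have hdet := totalDegree_det_le A11 d h11
  have hadj := totalDegree_adjugate_apply_le A11 d h11
  rw [Fintype.card_fin] at hdet hadj
  intro i j
  have hsmul : ((A11.det • A22) i j).totalDegree ≤ m * d + d :=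
    (totalDegree_mul _ _).trans (add_le_add hdet (h22 i j))
  have hprod : ((A21 * A11.adjugate * A12) i j).totalDegree ≤ d + (m - 1) * d + d :=
    totalDegree_mul_apply_le _ _ (totalDegree_mul_apply_le _ _ h21 hadj) h12 i j
  have hsum : d + (m - 1) * d + d = m * d + d := by
    obtain ⟨k, rfl⟩ := Nat.exists_eq_add_of_le' hm
    simp only [Nat.add_sub_cancel]; ring
  refine (totalDegree_sub _ _).trans (max_le ?_ ?_) <;> linarith [add_one_mul m d]
end

section
/- Let R be a commutative ring, σ a type, and let n = 2^m with m ≥ 1. Let A be an n×n matrix over MvPolynomial σ R such that every entry of A has total degree at most d. Define Δ_0(A) := Δ(A) and, for 1 ≤ k ≤ m−1, Δ_k(A) := Δ(Δ_{k−1}(A)), so that Δ_k(A) is a square matrix of size n/2^(k+1). Then for all 0 ≤ k ≤ m−1, every entry of Δ_k(A) has total degree at most d · ∏_{j=0}^{k} (n/2^(j+1) + 1). -/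
/-- The fraction-free Schur complement `Δ(M) = det(M11) • M22 - M21 * adj(M11) * M12`
of a `2s × 2s` matrix `M`, where `M11, M12, M21, M22` are the `s × s` blocks
(top-left, top-right, bottom-left, bottom-right) of `M`. -/
def ffSchur {R : Type*} [CommRing R] {s : ℕ} (M : Matrix (Fin (2 * s)) (Fin (2 * s)) R) :
    Matrix (Fin s) (Fin s) R :=
  let top : Fin s → Fin (2 * s) := fun a => ⟨a.1, by have := a.2; omega⟩
  let bot : Fin s → Fin (2 * s) := fun a => ⟨s + a.1, by have := a.2; omega⟩
  let M11 := M.submatrix top top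
  let M12 := M.submatrix top bot
  let M21 := M.submatrix bot top
  let M22 := M.submatrix bot bot
  M11.det • M22 - M21 * M11.adjugate * M12

/-- Reindexing a square matrix along an equality of sizes. -/
def castMat {R : Type*} {a b : ℕ} (h : a = b) (M : Matrix (Fin a) (Fin a) R) :
    Matrix (Fin b) (Fin b) R :=
  M.submatrix (Fin.cast h.symm) (Fin.cast h.symm)

/-- The fraction-free Schur complement of a matrix of size `2 ^ (t + 1)`,
a matrix of size `2 ^ t`. -/
def ffSchurPow {R : Type*} [CommRing R] (t : ℕ)
    (M : Matrix (Fin (2 ^ (t + 1))) (Fin (2 ^ (t + 1))) R) :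
    Matrix (Fin (2 ^ t)) (Fin (2 ^ t)) R :=
  ffSchur (castMat (by rw [pow_succ]; ring) M)

/-- The iterated fraction-free Schur complement: `ffSchurIter k t M` is
`Δ_k(M) = Δ(Δ(⋯Δ(M)⋯))` (`k + 1` applications of `Δ`), taking a matrix of size
`2 ^ (t + 1 + k)` to a matrix of size `2 ^ t`. -/
def ffSchurIter {R : Type*} [CommRing R] :
    (k t : ℕ) → Matrix (Fin (2 ^ (t + 1 + k))) (Fin (2 ^ (t + 1 + k))) R →
      Matrix (Fin (2 ^ t)) (Fin (2 ^ t)) R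
  | 0, t, M => ffSchurPow t M
  | k + 1, t, M => ffSchurIter k t (ffSchurPow (t + 1 + k) M)

/-!
One application of `Δ` multiplies a uniform degree bound `D` on the entries of a `2s × 2s`
matrix by `s + 1`: `det B₁₁` has degree at most `s D`, each entry of `adj B₁₁` is an
`(s - 1)`-minor and so has degree at most `(s - 1) D`, hence both `det B₁₁ • B₂₂` and
`B₂₁ * adj B₁₁ * B₁₂` have entries of degree at most `(s + 1) D`. Along the iteration the sizes
are `s = n / 2, n / 4, …`, which gives the product.
-/

namespace MvPolynomial

variable {R σ : Type*} [CommRing R]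

section Matrix

variable {n : Type*} [DecidableEq n] [Fintype n]

theorem totalDegree_det_le_sum (M : Matrix n n (MvPolynomial σ R)) (b : n → ℕ)
    (h : ∀ i j, (M i j).totalDegree ≤ b i) :
    M.det.totalDegree ≤ ∑ i, b i := by
  rw [Matrix.det_apply]
  refine totalDegree_finsetSum_le fun τ _ => (totalDegree_smul_le _ _).trans ?_
  calc (∏ i, M (τ i) i).totalDegree ≤ ∑ i, (M (τ i) i).totalDegree :=
        totalDegree_finsetProd _ _
    _ ≤ ∑ i, b (τ i) := Finset.sum_le_sum fun i _ => h _ _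
    _ = ∑ i, b i := Equiv.sum_comp τ b

theorem totalDegree_det_le (M : Matrix n n (MvPolynomial σ R)) (D : ℕ)
    (h : ∀ i j, (M i j).totalDegree ≤ D) :
    M.det.totalDegree ≤ Fintype.card n * D := by
  simpa using totalDegree_det_le_sum M (fun _ => D) h

theorem totalDegree_adjugate_le (M : Matrix n n (MvPolynomial σ R)) (D : ℕ)
    (h : ∀ i j, (M i j).totalDegree ≤ D) (i j : n) :
    (M.adjugate i j).totalDegree ≤ (Fintype.card n - 1) * D := by
  have hrow : ∀ r c,
      (M.updateRow j (Pi.single i 1) r c).totalDegree ≤ if r = j then 0 else D := by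
    intro r c
    by_cases hr : r = j
    · subst hr
      by_cases hc : c = i <;> simp [hc]
    · simpa [Matrix.updateRow_ne hr, hr] using h r c
  rw [Matrix.adjugate_apply]
  refine (totalDegree_det_le_sum _ _ hrow).trans_eq ?_
  simp [Finset.sum_ite, Finset.filter_ne', Finset.card_erase_of_mem]

end Matrix

theorem totalDegree_ffSchur_le {s : ℕ}
    (M : Matrix (Fin (2 * s)) (Fin (2 * s)) (MvPolynomial σ R)) (D : ℕ)
    (h : ∀ i j, (M i j).totalDegree ≤ D) (i j : Fin s) :
    (ffSchur M i j).totalDegree ≤ (s + 1) * D := by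
  obtain ⟨s, rfl⟩ : ∃ s', s = s' + 1 := ⟨s - 1, by have := i.pos; omega⟩
  set M₁₁ : Matrix (Fin (s + 1)) (Fin (s + 1)) (MvPolynomial σ R) :=
    M.submatrix (fun a => ⟨a.1, by omega⟩) (fun a => ⟨a.1, by omega⟩)
  have hdet : M₁₁.det.totalDegree ≤ (s + 1) * D := by
    simpa using totalDegree_det_le M₁₁ D fun _ _ => h _ _
  have hadj : ∀ a b, (M₁₁.adjugate a b).totalDegree ≤ s * D := by
    simpa using totalDegree_adjugate_le M₁₁ D fun _ _ => h _ _
  simp only [ffSchur, Matrix.sub_apply, Matrix.smul_apply, Matrix.mul_apply, smul_eq_mul]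
  refine (totalDegree_sub _ _).trans (max_le ?_ ?_)
  · calc _ ≤ (s + 1) * D + D := (totalDegree_mul _ _).trans (add_le_add hdet (h _ _))
      _ = (s + 1 + 1) * D := by ring
  · refine totalDegree_finsetSum_le fun c _ => (totalDegree_mul _ _).trans ?_
    calc _ ≤ D + s * D + D :=
          add_le_add (totalDegree_finsetSum_le fun b _ =>
            (totalDegree_mul _ _).trans (add_le_add (h _ _) (hadj _ _))) (h _ _)
      _ = (s + 1 + 1) * D := by ring

theorem totalDegree_ffSchurPow_le (t : ℕ)
    (M : Matrix (Fin (2 ^ (t + 1))) (Fin (2 ^ (t + 1))) (MvPolynomial σ R)) (D : ℕ)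
    (h : ∀ i j, (M i j).totalDegree ≤ D) (i j : Fin (2 ^ t)) :
    (ffSchurPow t M i j).totalDegree ≤ (2 ^ t + 1) * D :=
  totalDegree_ffSchur_le _ D (fun _ _ => h _ _) i j

theorem totalDegree_ffSchurIter_le_prod (k t : ℕ)
    (M : Matrix (Fin (2 ^ (t + 1 + k))) (Fin (2 ^ (t + 1 + k))) (MvPolynomial σ R)) (D : ℕ)
    (h : ∀ i j, (M i j).totalDegree ≤ D) (i j : Fin (2 ^ t)) :
    (ffSchurIter k t M i j).totalDegree ≤ D * ∏ l ∈ Finset.range (k + 1), (2 ^ (t + l) + 1) := by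
  induction k generalizing D with
  | zero => simpa [ffSchurIter, mul_comm] using totalDegree_ffSchurPow_le t M D h i j
  | succ k ih =>
    calc (ffSchurIter (k + 1) t M i j).totalDegree
        ≤ (2 ^ (t + 1 + k) + 1) * D * ∏ l ∈ Finset.range (k + 1), (2 ^ (t + l) + 1) :=
          ih (ffSchurPow (t + 1 + k) M) _ (totalDegree_ffSchurPow_le _ M D h)
      _ = D * ∏ l ∈ Finset.range (k + 1 + 1), (2 ^ (t + l) + 1) := by
          rw [Finset.prod_range_succ _ (k + 1)]
          ring

end MvPolynomial

/-- Let `n = 2 ^ m` with `m ≥ 1`, and let `A` be an `n × n` matrix of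
multivariate polynomials of total degree at most `d`.  Then for all `0 ≤ k ≤ m - 1`, every
entry of the iterated fraction-free Schur complement `Δ_k(A)` (a matrix of size
`n / 2 ^ (k + 1)`) has total degree at most `d * ∏_{j = 0}^{k} (n / 2 ^ (j + 1) + 1)`. -/
theorem totalDegree_ffSchurIter_le {R : Type*} [CommRing R] {σ : Type*} (m d : ℕ)
    (hm : 1 ≤ m) (A : Matrix (Fin (2 ^ m)) (Fin (2 ^ m)) (MvPolynomial σ R))
    (hA : ∀ i j, (A i j).totalDegree ≤ d) (k : ℕ) (hk : k ≤ m - 1) :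
    ∀ i j, ((ffSchurIter k (m - 1 - k)
          (castMat (by rw [show m - 1 - k + 1 + k = m from by omega]) A)) i j).totalDegree ≤
      d * ∏ l ∈ Finset.range (k + 1), (2 ^ m / 2 ^ (l + 1) + 1) := by
  intro i j
  refine (MvPolynomial.totalDegree_ffSchurIter_le_prod k (m - 1 - k) _ d
    (fun _ _ => hA _ _) i j).trans_eq ?_
  rw [← Finset.prod_range_reflect]
  refine congrArg (d * ·) (Finset.prod_congr rfl fun l hl => ?_)
  rw [Finset.mem_range] at hl
  rw [Nat.pow_div (by omega) two_pos]
  congr 2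
  omega
end

section
/- Let n = 2^m with m ≥ 2, let P = MvPolynomial ((Fin n) × (Fin n)) ℚ, let F be the field of fractions of P, and let A be the generic n×n matrix over F whose (i,j) entry is the image of the variable x_{ij}. For 1 ≤ s ≤ n let A_{1..s} denote the leading principal s×s submatrix of A. Define E_0 := Δ(A) and, for i ≥ 1, E_i := c_i⁻¹ • Δ(E_{i−1}) in F, where c_i := det(A_{1..(2^i−1)n/2^i})^(n/2^(i+1)). Then for all 0 ≤ i ≤ m−2, every entry of E_i lies in the image of P in F, and its (unique) preimage polynomial has total degree at most ((2^(i+1)−1)·n)/2^(i+1) + 1. -/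
/-- `leadDet A s` is the determinant of the leading principal `s × s` submatrix
`A_{1..s}` of `A` (and junk value `0` if `s` exceeds the size of `A`;
in particular `leadDet A 0 = 1`, the determinant of the empty matrix). -/
def leadDet {F : Type*} [CommRing F] {n : ℕ} (A : Matrix (Fin n) (Fin n) F) (s : ℕ) : F :=
  if h : s ≤ n then (A.submatrix (Fin.castLE h) (Fin.castLE h)).det else 0

/-- The generic `n × n` matrix over the fraction field of
`P = MvPolynomial (Fin n × Fin n) ℚ`, whose `(i, j)` entry is the image of the
variable `x_{i j}`. -/
noncomputable def genericMatrix (n : ℕ) :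
    Matrix (Fin n) (Fin n) (FractionRing (MvPolynomial (Fin n × Fin n) ℚ)) :=
  fun i j => algebraMap (MvPolynomial (Fin n × Fin n) ℚ) _ (MvPolynomial.X (i, j))

/-!
Write `d_k = det A_{1..k}` and `S_k` for the Schur complement of `A_{1..k}` in `A`. Over a
field `Δ(B) = det(B11) • S(B)`; Schur complements compose (the Schur complement of `(S_k)_{1..s}`
in `S_k` is `S_{k+s}`) and `d_{k+s} = d_k · det (S_k)_{1..s}`. Since `Δ` is homogeneous of degree
`s + 1`, induction on `i` gives `E_i = d_k • S_k` with `k = n - n / 2^(i+1)`: dividing by `c_i`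
removes exactly the surplus factor `d_k ^ s`. Finally, by Sylvester's bordering identity the
`(a, b)` entry of `d_k • S_k` is the `(k+1)`-minor of `A` on rows `1..k, k+a` and columns
`1..k, k+b`, a polynomial of total degree `k + 1`.
-/

open Matrix

section Blocks

variable {α : Type*} {N : ℕ}

-- `a < N - j` already forces `j + a < N`, so no hypothesis `j ≤ N` is needed.
def trailingEmb (j : ℕ) (a : Fin (N - j)) : Fin N := ⟨j + a, by omega⟩

def leadBlock (B : Matrix (Fin N) (Fin N) α) (j : ℕ) (h : j ≤ N) : Matrix (Fin j) (Fin j) α :=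
  B.submatrix (Fin.castLE h) (Fin.castLE h)

def finSumFinSubEquiv {j : ℕ} (h : j ≤ N) : Fin j ⊕ Fin (N - j) ≃ Fin N :=
  finSumFinEquiv.trans (finCongr (Nat.add_sub_cancel' h))

theorem coe_finSumFinSubEquiv {j : ℕ} (h : j ≤ N) :
    ⇑(finSumFinSubEquiv h) = Sum.elim (Fin.castLE h) (trailingEmb j) := by
  ext (_ | _) <;> rfl

theorem submatrix_finSumFinSubEquiv (B : Matrix (Fin N) (Fin N) α) {j : ℕ} (h : j ≤ N) :
    B.submatrix (finSumFinSubEquiv h) (finSumFinSubEquiv h)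
      = fromBlocks (leadBlock B j h) (B.submatrix (Fin.castLE h) (trailingEmb j))
          (B.submatrix (trailingEmb j) (Fin.castLE h))
          (B.submatrix (trailingEmb j) (trailingEmb j)) := by
  rw [coe_finSumFinSubEquiv]
  ext (_ | _) (_ | _) <;> rfl

theorem castMat_castMat {a b c : ℕ} (h₁ : a = b) (h₂ : b = c)
    (M : Matrix (Fin a) (Fin a) α) :
    castMat h₂ (castMat h₁ M) = castMat (h₁.trans h₂) M :=
  rfl

end Blocks

section CommRing

variable {R : Type*} [CommRing R] {N : ℕ}

theorem leadDet_eq_det_leadBlock (B : Matrix (Fin N) (Fin N) R) {j : ℕ} (h : j ≤ N) :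
    leadDet B j = (leadBlock B j h).det :=
  dif_pos h

theorem leadDet_self (B : Matrix (Fin N) (Fin N) R) : leadDet B N = B.det := by
  rw [leadDet_eq_det_leadBlock B le_rfl]
  rfl

theorem castMat_smul {a b : ℕ} (h : a = b) (c : R) (M : Matrix (Fin a) (Fin a) R) :
    castMat h (c • M) = c • castMat h M :=
  rfl

theorem castMat_inv {a b : ℕ} (h : a = b) (M : Matrix (Fin a) (Fin a) R) :
    (castMat h M)⁻¹ = castMat h M⁻¹ :=
  inv_submatrix_equiv M (finCongr h.symm) (finCongr h.symm)

theorem ffSchur_smul {s : ℕ} (c : R) (M : Matrix (Fin (2 * s)) (Fin (2 * s)) R) :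
    ffSchur (c • M) = c ^ (s + 1) • ffSchur M := by
  obtain _ | s := s
  · exact Subsingleton.elim _ _
  have hsub {k l : ℕ} (r : Fin k → Fin (2 * (s + 1))) (c' : Fin l → Fin (2 * (s + 1))) :
      (c • M).submatrix r c' = c • M.submatrix r c' := rfl
  simp only [ffSchur, hsub, det_smul, adjugate_smul, Fintype.card_fin, Matrix.smul_mul,
    Matrix.mul_smul, smul_smul, smul_sub, Nat.add_sub_cancel]
  congr 2 <;> ring

end CommRing

theorem Matrix.adjugate_eq_det_smul_inv {F n : Type*} [Field F] [Fintype n] [DecidableEq n]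
    (M : Matrix n n F) (hM : M.det ≠ 0) : M.adjugate = M.det • M⁻¹ := by
  rw [inv_def, smul_smul, Ring.mul_inverse_cancel _ (isUnit_iff_ne_zero.mpr hM), one_smul]

section SchurComplement

variable {F : Type*} [Field F] {N : ℕ}

noncomputable def schurCompl (B : Matrix (Fin N) (Fin N) F) (j : ℕ) (h : j ≤ N) :
    Matrix (Fin (N - j)) (Fin (N - j)) F :=
  B.submatrix (trailingEmb j) (trailingEmb j)
    - B.submatrix (trailingEmb j) (Fin.castLE h) * (leadBlock B j h)⁻¹
      * B.submatrix (Fin.castLE h) (trailingEmb j)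

noncomputable def scaledSchurCompl (B : Matrix (Fin N) (Fin N) F) (j : ℕ) (h : j ≤ N) :
    Matrix (Fin (N - j)) (Fin (N - j)) F :=
  leadDet B j • schurCompl B j h

theorem det_submatrix_sumElim_castLE (B : Matrix (Fin N) (Fin N) F) {j : ℕ} (h : j ≤ N)
    (hj : leadDet B j ≠ 0) {β : Type*} [Fintype β] [DecidableEq β] (r c : β → Fin N) :
    (B.submatrix (Sum.elim (Fin.castLE h) r) (Sum.elim (Fin.castLE h) c)).det
      = leadDet B j * (B.submatrix r c - B.submatrix r (Fin.castLE h) * (leadBlock B j h)⁻¹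
          * B.submatrix (Fin.castLE h) c).det := by
  rw [leadDet_eq_det_leadBlock B h] at hj ⊢
  let := (leadBlock B j h).invertibleOfIsUnitDet (isUnit_iff_ne_zero.mpr hj)
  rw [← invOf_eq_nonsing_inv, ← det_fromBlocks₁₁]
  congr 1
  ext (_ | _) (_ | _) <;> rfl

theorem det_eq_leadDet_mul_det_schurCompl (B : Matrix (Fin N) (Fin N) F) {j : ℕ} (h : j ≤ N)
    (hj : leadDet B j ≠ 0) : B.det = leadDet B j * (schurCompl B j h).det := by
  rw [← det_submatrix_equiv_self (finSumFinSubEquiv h), coe_finSumFinSubEquiv,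
    det_submatrix_sumElim_castLE B h hj]
  rfl

theorem leadDet_add (B : Matrix (Fin N) (Fin N) F) {j t : ℕ} (h : j + t ≤ N)
    (hj : leadDet B j ≠ 0) :
    leadDet B (j + t) = leadDet B j * leadDet (schurCompl B j (by omega)) t := by
  have hborder := det_submatrix_sumElim_castLE B (by omega) hj
    (fun p : Fin t => trailingEmb j (Fin.castLE (by omega) p))
    (fun p : Fin t => trailingEmb j (Fin.castLE (by omega) p))
  rw [leadDet_eq_det_leadBlock B h, leadDet_eq_det_leadBlock _ (by omega : t ≤ N - j),
    ← det_submatrix_equiv_self finSumFinEquiv]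
  convert hborder using 2
  · ext (_ | _) (_ | _) <;> rfl
  · rfl

theorem det_schurCompl_ne_zero (B : Matrix (Fin N) (Fin N) F) {j : ℕ} (h : j ≤ N)
    (hB : B.det ≠ 0) (hj : leadDet B j ≠ 0) : (schurCompl B j h).det ≠ 0 := by
  rw [det_eq_leadDet_mul_det_schurCompl B h hj] at hB
  exact right_ne_zero_of_mul hB

theorem leadDet_schurCompl_ne_zero (B : Matrix (Fin N) (Fin N) F) {j t : ℕ} (h : j + t ≤ N)
    (hj : leadDet B j ≠ 0) (hjt : leadDet B (j + t) ≠ 0) :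
    leadDet (schurCompl B j (by omega)) t ≠ 0 := by
  rw [leadDet_add B h hj] at hjt
  exact right_ne_zero_of_mul hjt

theorem schurCompl_inv (B : Matrix (Fin N) (Fin N) F) {j : ℕ} (h : j ≤ N) (hB : B.det ≠ 0)
    (hj : leadDet B j ≠ 0) :
    (schurCompl B j h)⁻¹ = B⁻¹.submatrix (trailingEmb j) (trailingEmb j) := by
  have hblocks : B⁻¹.submatrix (finSumFinSubEquiv h) (finSumFinSubEquiv h)
      * B.submatrix (finSumFinSubEquiv h) (finSumFinSubEquiv h) = fromBlocks 1 0 0 1 := by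
    rw [fromBlocks_one, ← inv_submatrix_equiv,
      nonsing_inv_mul _ (by rw [det_submatrix_equiv_self]; exact isUnit_iff_ne_zero.mpr hB)]
  rw [submatrix_finSumFinSubEquiv, submatrix_finSumFinSubEquiv, fromBlocks_multiply,
    fromBlocks_inj] at hblocks
  obtain ⟨-, -, h21, h22⟩ := hblocks
  rw [leadDet_eq_det_leadBlock B h] at hj
  refine inv_eq_left_inv ?_
  rw [schurCompl, Matrix.mul_sub, ← Matrix.mul_assoc, ← Matrix.mul_assoc,
    eq_neg_of_add_eq_zero_right h21, Matrix.neg_mul, Matrix.neg_mul,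
    Matrix.mul_assoc _ (leadBlock B j h), mul_nonsing_inv _ (isUnit_iff_ne_zero.mpr hj),
    Matrix.mul_one, sub_neg_eq_add, add_comm]
  exact h22

theorem schurCompl_schurCompl (B : Matrix (Fin N) (Fin N) F) {j t : ℕ} (h : j + t ≤ N)
    (hB : B.det ≠ 0) (hj : leadDet B j ≠ 0) (hjt : leadDet B (j + t) ≠ 0) :
    schurCompl (schurCompl B j (by omega)) t (by omega)
      = castMat (by omega) (schurCompl B (j + t) h) := by
  have hSj := det_schurCompl_ne_zero B (by omega) hB hj
  have hSjt := leadDet_schurCompl_ne_zero B h hj hjt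
  refine inv_inj ?_ (isUnit_iff_ne_zero.mpr (det_schurCompl_ne_zero _ _ hSj hSjt))
  rw [schurCompl_inv _ _ hSj hSjt, schurCompl_inv B _ hB hj, castMat_inv,
    schurCompl_inv B h hB hjt]
  ext a b
  simp only [castMat, submatrix_apply, trailingEmb, Fin.val_cast, Nat.add_assoc]

theorem scaledSchurCompl_apply (B : Matrix (Fin N) (Fin N) F) {j : ℕ} (h : j ≤ N)
    (hj : leadDet B j ≠ 0) (a b : Fin (N - j)) :
    scaledSchurCompl B j h a b
      = (B.submatrix (Sum.elim (Fin.castLE h) fun _ : Unit => trailingEmb j a)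
          (Sum.elim (Fin.castLE h) fun _ : Unit => trailingEmb j b)).det := by
  rw [det_submatrix_sumElim_castLE B h hj, det_unique]
  rfl

theorem castMat_scaledSchurCompl_congr (B : Matrix (Fin N) (Fin N) F) {k k' n : ℕ}
    (hk : k ≤ N) (hk' : k' ≤ N) (h : N - k = n) (h' : N - k' = n) (he : k = k') :
    castMat h (scaledSchurCompl B k hk) = castMat h' (scaledSchurCompl B k' hk') := by
  subst he
  rfl

theorem ffSchur_castMat (B : Matrix (Fin N) (Fin N) F) {s : ℕ} (h : N = 2 * s)
    (hs : leadDet B s ≠ 0) :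
    ffSchur (castMat h B) = castMat (by omega) (scaledSchurCompl B s (by omega)) := by
  simp only [ffSchur]
  rw [adjugate_eq_det_smul_inv _ (by rwa [leadDet_eq_det_leadBlock B (by omega)] at hs),
    Matrix.mul_smul, Matrix.smul_mul, ← smul_sub, scaledSchurCompl,
    leadDet_eq_det_leadBlock B (by omega)]
  rfl

theorem ffSchur_castMat_scaledSchurCompl (B : Matrix (Fin N) (Fin N) F) {k s : ℕ}
    (hk : k ≤ N) (hsize : N - k = 2 * s) (hB : B.det ≠ 0)
    (hk0 : leadDet B k ≠ 0) (hks : leadDet B (k + s) ≠ 0) :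
    ffSchur (castMat hsize (scaledSchurCompl B k hk))
      = leadDet B k ^ s • castMat (by omega) (scaledSchurCompl B (k + s) (by omega)) := by
  have hS := leadDet_schurCompl_ne_zero B (by omega) hk0 hks
  rw [scaledSchurCompl, castMat_smul, ffSchur_smul, ffSchur_castMat _ hsize hS, scaledSchurCompl,
    castMat_smul, schurCompl_schurCompl B (by omega) hB hk0 hks, castMat_castMat,
    scaledSchurCompl, castMat_smul, leadDet_add B (by omega) hk0, smul_smul, smul_smul]
  congr 1
  ring

end SchurComplement

theorem two_pow_sub_one_mul_div {j M : ℕ} (h : j ≤ M) :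
    (2 ^ j - 1) * 2 ^ M / 2 ^ j = 2 ^ M - 2 ^ (M - j) := by
  have hM : (2 : ℕ) ^ M = 2 ^ (M - j) * 2 ^ j := by rw [← pow_add, Nat.sub_add_cancel h]
  rw [hM, show (2 ^ j - 1) * (2 ^ (M - j) * 2 ^ j) = (2 ^ j - 1) * 2 ^ (M - j) * 2 ^ j by ring,
    Nat.mul_div_cancel _ (Nat.two_pow_pos j), Nat.sub_one_mul, mul_comm]

theorem eq_scaledSchurCompl_of_iterate_ffSchur {F : Type*} [Field F] {m : ℕ}
    (B : Matrix (Fin (2 ^ m)) (Fin (2 ^ m)) F) (hB : ∀ k ≤ 2 ^ m, leadDet B k ≠ 0)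
    (E : (i : ℕ) → Matrix (Fin (2 ^ (m - 1 - i))) (Fin (2 ^ (m - 1 - i))) F)
    (h₀ : 2 ^ m = 2 * 2 ^ (m - 1)) (hE0 : E 0 = ffSchur (castMat h₀ B))
    (hEstep : ∀ i, i + 1 ≤ m - 2 → ∀ h : 2 ^ (m - 1 - i) = 2 * 2 ^ (m - 1 - (i + 1)),
      E (i + 1) = (leadDet B ((2 ^ (i + 1) - 1) * 2 ^ m / 2 ^ (i + 1))
          ^ (2 ^ m / 2 ^ (i + 2)))⁻¹ • ffSchur (castMat h (E i)))
    {i : ℕ} (hi : i ≤ m - 2) :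
    E i = castMat (Nat.sub_sub_self (Nat.pow_le_pow_right two_pos (by omega)))
      (scaledSchurCompl B (2 ^ m - 2 ^ (m - 1 - i)) (Nat.sub_le _ _)) := by
  have hdet : B.det ≠ 0 := leadDet_self B ▸ hB _ le_rfl
  induction i with
  | zero =>
    rw [hE0, ffSchur_castMat B _ (hB _ (by omega))]
    refine castMat_scaledSchurCompl_congr _ _ _ _ _ ?_
    rw [Nat.sub_zero, h₀, two_mul, Nat.add_sub_cancel]
  | succ i ih =>
    have hhalf : 2 ^ (m - 1 - i) = 2 * 2 ^ (m - 1 - (i + 1)) := by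
      rw [← pow_succ']
      congr 1
      omega
    have hle : 2 ^ (m - 1 - i) ≤ 2 ^ m := Nat.pow_le_pow_right two_pos (by omega)
    rw [hEstep i hi hhalf, ih (by omega), castMat_castMat,
      ffSchur_castMat_scaledSchurCompl B _ (by omega) hdet (hB _ (by omega)) (hB _ (by omega)),
      two_pow_sub_one_mul_div (by omega), Nat.pow_div (by omega) two_pos,
      show m - (i + 1) = m - 1 - i by omega, show m - (i + 2) = m - 1 - (i + 1) by omega,
      inv_smul_smul₀ (pow_ne_zero _ (hB _ (Nat.sub_le _ _)))]
    exact castMat_scaledSchurCompl_congr _ _ _ _ _ (by omega)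

theorem MvPolynomial.totalDegree_det_le_s12 {σ R ι : Type*} [CommRing R] [Fintype ι] [DecidableEq ι]
    (M : Matrix ι ι (MvPolynomial σ R)) {d : ℕ} (hM : ∀ i j, (M i j).totalDegree ≤ d) :
    M.det.totalDegree ≤ Fintype.card ι * d := by
  rw [det_apply]
  refine totalDegree_finsetSum_le fun e _ => ?_
  refine (totalDegree_smul_le _ _).trans <| (totalDegree_finsetProd _ _).trans ?_
  simpa using Finset.sum_le_sum fun i (_ : i ∈ Finset.univ) => hM (e i) i

theorem submatrix_genericMatrix {n : ℕ} {ι κ : Type*} (r : ι → Fin n) (c : κ → Fin n) :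
    (genericMatrix n).submatrix r c
      = ((mvPolynomialX (Fin n) (Fin n) ℚ).submatrix r c).map (algebraMap _ _) :=
  rfl

theorem leadDet_genericMatrix_ne_zero {n k : ℕ} (h : k ≤ n) :
    leadDet (genericMatrix n) k ≠ 0 := by
  have hrename : (mvPolynomialX (Fin n) (Fin n) ℚ).submatrix (Fin.castLE h) (Fin.castLE h)
      = (MvPolynomial.rename (Prod.map (Fin.castLE h) (Fin.castLE h))).mapMatrix
          (mvPolynomialX (Fin k) (Fin k) ℚ) := by
    ext
    simp [mvPolynomialX]
  rw [leadDet_eq_det_leadBlock _ h, leadBlock, submatrix_genericMatrix, ← RingHom.mapMatrix_apply,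
    ← RingHom.map_det, hrename, ← AlgHom.map_det,
    map_ne_zero_iff _ (IsFractionRing.injective _ _),
    map_ne_zero_iff _ (MvPolynomial.rename_injective _
      ((Fin.castLE_injective h).prodMap (Fin.castLE_injective h)))]
  exact det_mvPolynomialX_ne_zero _ _

theorem exists_totalDegree_le_scaledSchurCompl_genericMatrix {n k : ℕ} (h : k ≤ n)
    (a b : Fin (n - k)) :
    ∃ p : MvPolynomial (Fin n × Fin n) ℚ,
      algebraMap _ (FractionRing (MvPolynomial (Fin n × Fin n) ℚ)) p
          = scaledSchurCompl (genericMatrix n) k h a b ∧ p.totalDegree ≤ k + 1 := by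
  rw [scaledSchurCompl_apply _ h (leadDet_genericMatrix_ne_zero h), submatrix_genericMatrix,
    ← RingHom.mapMatrix_apply, ← RingHom.map_det]
  refine ⟨_, rfl, (MvPolynomial.totalDegree_det_le_s12 _ (d := 1) fun _ _ => ?_).trans (by simp)⟩
  exact (MvPolynomial.totalDegree_X _).le

/-- Let `n = 2 ^ m` with `m ≥ 2`, `P = MvPolynomial (Fin n × Fin n) ℚ`,
`F` its fraction field, and `A` the generic `n × n` matrix over `F`.  Define `E_0 = Δ(A)`
and, for `i ≥ 1`, `E_i = c_i⁻¹ • Δ(E_{i-1})` where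
`c_i = det(A_{1..(2^i - 1)n/2^i}) ^ (n / 2^(i+1))`.  Then for all `0 ≤ i ≤ m - 2` every
entry of `E_i` lies in the image of `P` in `F`, with preimage polynomial of total degree
at most `(2^(i+1) - 1) * n / 2^(i+1) + 1`. -/
theorem pureDelta_cancellation (m : ℕ) (hm : 2 ≤ m)
    (E : (i : ℕ) → Matrix (Fin (2 ^ (m - 1 - i))) (Fin (2 ^ (m - 1 - i)))
      (FractionRing (MvPolynomial (Fin (2 ^ m) × Fin (2 ^ m)) ℚ)))
    (hE0 : E 0 = ffSchur (castMat (show (2:ℕ) ^ m = 2 * 2 ^ (m - 1) by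
        conv_lhs => rw [show m = (m - 1) + 1 from by omega]
        rw [pow_succ]; ring) (genericMatrix (2 ^ m))))
    (hEstep : ∀ (i : ℕ) (hi1 : 1 ≤ i) (hi2 : i ≤ m - 2),
      E i = (leadDet (genericMatrix (2 ^ m)) ((2 ^ i - 1) * 2 ^ m / 2 ^ i)
              ^ (2 ^ m / 2 ^ (i + 1)))⁻¹ •
        ffSchur (castMat (show (2:ℕ) ^ (m - 1 - (i - 1)) = 2 * 2 ^ (m - 1 - i) by
          rw [show m - 1 - (i - 1) = m - 1 - i + 1 from by omega, pow_succ]; ring)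
          (E (i - 1)))) :
    ∀ i : ℕ, i ≤ m - 2 → ∀ a b, ∃ p : MvPolynomial (Fin (2 ^ m) × Fin (2 ^ m)) ℚ,
      algebraMap (MvPolynomial (Fin (2 ^ m) × Fin (2 ^ m)) ℚ)
          (FractionRing (MvPolynomial (Fin (2 ^ m) × Fin (2 ^ m)) ℚ)) p = E i a b ∧
        p.totalDegree ≤ (2 ^ (i + 1) - 1) * 2 ^ m / 2 ^ (i + 1) + 1 := by
  intro i hi a b
  have hsize : 2 ^ m - (2 ^ m - 2 ^ (m - 1 - i)) = 2 ^ (m - 1 - i) :=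
    Nat.sub_sub_self (Nat.pow_le_pow_right two_pos (by omega))
  obtain ⟨p, hp, hdeg⟩ := exists_totalDegree_le_scaledSchurCompl_genericMatrix
    (Nat.sub_le (2 ^ m) (2 ^ (m - 1 - i))) (Fin.cast hsize.symm a) (Fin.cast hsize.symm b)
  have hE := eq_scaledSchurCompl_of_iterate_ffSchur (genericMatrix (2 ^ m))
    (fun _ => leadDet_genericMatrix_ne_zero) E _ hE0 (fun i hi _ => hEstep (i + 1) (by omega) hi) hi
  refine ⟨p, by rw [hp, hE]; rfl, ?_⟩
  rw [two_pow_sub_one_mul_div (by omega), show m - (i + 1) = m - 1 - i by omega]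
  exact hdeg
end
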